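/- (Faulhaber's theorem) For every m ≥ 1 there exists a polynomial F_m with rational coefficients such that for all natural numbers n, 1^{2m-1} + 2^{2m-1} + ... + n^{2m-1} = F_m(n(n+1)/2). -/

import Mathlib

/-!
Summing `i ^ (2m - 1)` gives `(B₂ₘ(n + 1) - B₂ₘ(0)) / 2m`. The symmetry `B₂ₘ(1 - x) = B₂ₘ(x)` makes
`B₂ₘ(x + 1/2)` an even polynomial, hence a polynomial in `(x + 1/2)² = x(x + 1) + 1/4`; evaluated at
`x = n + 1/2` this writes `B₂ₘ(n + 1)` as a polynomial in `n(n + 1)/2`.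
-/

open Finset Polynomial

namespace Polynomial

variable {R : Type*}

theorem coeff_comp_neg_X [Ring R] (p : R[X]) (n : ℕ) :
    (p.comp (-X)).coeff n = (-1) ^ n * p.coeff n := by
  rw [← neg_one_mul (X : R[X]), ← C_1, ← C_neg, comp_C_mul_X_coeff]
  exact ((Commute.neg_one_right _).pow_right n).eq

theorem expand_two_contract_of_comp_neg_X [CommRing R] [IsAddTorsionFree R] {p : R[X]}
    (h : p.comp (-X) = p) : expand R 2 (contract 2 p) = p := by
  ext n
  rw [coeff_expand two_pos, coeff_contract two_ne_zero]
  split_ifs with hn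
  · rw [Nat.div_mul_cancel hn]
  · have hodd : Odd n := Nat.odd_iff.mpr (by omega)
    have := coeff_comp_neg_X p n
    rw [h, hodd.neg_one_pow, neg_one_mul, eq_comm, neg_eq_self] at this
    exact this.symm

theorem bernoulli_comp_X_add_half_comp_neg_X {k : ℕ} (hk : Even k) :
    ((bernoulli k).comp (X + C 2⁻¹)).comp (-X) = (bernoulli k).comp (X + C 2⁻¹) := by
  refine Polynomial.funext fun x => ?_
  have : -x + 2⁻¹ = 1 - (x + 2⁻¹) := by ring
  simp only [eval_comp, eval_add, eval_neg, eval_X, eval_C, this, bernoulli_eval_one_sub,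
    hk.neg_one_pow, one_mul]

theorem exists_bernoulli_eval_add_one_eq_eval_triangular {k : ℕ} (hk : Even k) :
    ∃ q : ℚ[X], ∀ x : ℚ, (bernoulli k).eval (x + 1) = q.eval (x * (x + 1) / 2) := by
  set p := (bernoulli k).comp (X + C 2⁻¹)
  refine ⟨(contract 2 p).comp (2 * X + C 4⁻¹), fun x => ?_⟩
  calc (bernoulli k).eval (x + 1)
      = p.eval (x + 2⁻¹) := by simp only [p, eval_comp, eval_add, eval_X, eval_C]; congr 1; ring
    _ = (expand ℚ 2 (contract 2 p)).eval (x + 2⁻¹) := by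
      rw [expand_two_contract_of_comp_neg_X (bernoulli_comp_X_add_half_comp_neg_X hk)]
    _ = (contract 2 p).eval (2 * (x * (x + 1) / 2) + 4⁻¹) := by rw [expand_eval]; ring_nf
    _ = _ := by simp only [eval_comp, eval_add, eval_mul, eval_X, eval_C, eval_ofNat]

end Polynomial

theorem sum_Icc_pow_eq_bernoulli_sub {p : ℕ} (hp : p ≠ 0) (n : ℕ) :
    (p + 1 : ℚ) * ∑ i ∈ Icc 1 n, (i : ℚ) ^ p =
      (Polynomial.bernoulli (p + 1)).eval ((n : ℚ) + 1) - _root_.bernoulli (p + 1) := by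
  have := sum_range_pow_eq_bernoulli_sub (n + 1) p
  rw [Nat.range_succ_eq_Icc_zero, Icc_eq_cons_Ioc n.zero_le, sum_cons, ← Icc_add_one_left_eq_Ioc,
    Nat.cast_zero, zero_pow hp, zero_add, zero_add] at this
  exact_mod_cast this

theorem faulhaber (m : ℕ) (hm : 1 ≤ m) :
    ∃ F : Polynomial ℚ, ∀ n : ℕ,
      ∑ i ∈ Finset.Icc 1 n, (i : ℚ) ^ (2 * m - 1) = F.eval ((n * (n + 1) : ℚ) / 2) := by
  obtain ⟨q, hq⟩ := exists_bernoulli_eval_add_one_eq_eval_triangular (even_two_mul m)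
  refine ⟨C (2 * m : ℚ)⁻¹ * (q - C (_root_.bernoulli (2 * m))), fun n => ?_⟩
  have hsum := sum_Icc_pow_eq_bernoulli_sub (p := 2 * m - 1) (by omega) n
  rw [Nat.sub_add_cancel (by omega), hq] at hsum
  have hm' : (2 * m : ℚ) ≠ 0 := by positivity
  rw [eval_mul, eval_sub, eval_C, eval_C, ← hsum]
  push_cast [Nat.cast_sub (by omega : 1 ≤ 2 * m)]
  rw [sub_add_cancel, inv_mul_cancel_left₀ hm']
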